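/- Let p be a prime, G a finite p-group, and M = F_p[G]^λ ⊕ N a finitely generated left F_p[G]-module, where N is a torsion F_p[G]-module and λ ∈ ℕ. Then the image T_G·M of multiplication by T_G on M is an F_p-vector space of dimension λ, i.e. T_G·M ≅ F_p^λ. -/

import Mathlib

/-!
Multiplication by `T_G` factors through the augmentation `ε` (sum of coefficients):
`T_G * β = ε(β) • T_G`. So `T_G • F_p[G]^λ` is the `λ`-dimensional space of the vectors
`(c_i • T_G)_i`, and it remains to see that `T_G` kills the torsion part `N`. For this, a nonzero
left ideal `I` of `F_p[G]` is a nonzero `F_p`-space, so `p ∣ |I|`, and the `p`-group `G` acting on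
`I` by left multiplication has a fixed point other than `0`; the left-invariant elements of
`F_p[G]` are the multiples of `T_G`, so `T_G ∈ I`. Applied to `I = F_p[G] α` with `α • n = 0`,
this gives `T_G • n = 0`.
-/

/-- `T_G = Σ_{g ∈ G} g` in the group algebra `F_p[G]`. -/
noncomputable def sumTG (p : ℕ) (G : Type) [Group G] [Fintype G] :
    MonoidAlgebra (ZMod p) G :=
  ∑ g : G, MonoidAlgebra.single g (1 : ZMod p)

open MonoidAlgebra

section

variable {p : ℕ} {G : Type} [Group G] [Fintype G]

theorem coeff_sumTG (g : G) : (sumTG p G).coeff g = 1 := by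
  classical
  simp [sumTG, coeff_sum, Finsupp.single_apply]

theorem sumTG_ne_zero [Fact (1 < p)] : sumTG p G ≠ 0 := fun h ↦ by
  simpa [h] using coeff_sumTG (p := p) (1 : G)

theorem sumTG_mul (β : MonoidAlgebra (ZMod p) G) :
    sumTG p G * β = (∑ g, β.coeff g) • sumTG p G := by
  ext g
  simp [coeff_mul_apply_right, coeff_sumTG, Finsupp.sum_fintype]

theorem eq_coeff_one_smul_sumTG {x : MonoidAlgebra (ZMod p) G}
    (hx : ∀ g : G, single g 1 * x = x) : x = x.coeff 1 • sumTG p G := by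
  ext g
  simpa [coeff_sumTG] using (congr_arg (·.coeff g) (hx g)).symm

end

section

variable {p : ℕ} [Fact p.Prime] {G : Type} [Group G] [Fintype G]

theorem sumTG_mem_of_ne_bot (hG : IsPGroup p G)
    {I : Submodule (MonoidAlgebra (ZMod p) G) (MonoidAlgebra (ZMod p) G)} (hI : I ≠ ⊥) :
    sumTG p G ∈ I := by
  have : Finite (MonoidAlgebra (ZMod p) G) := Module.finite_of_finite (ZMod p)
  have : Nontrivial I := Submodule.nontrivial_iff_ne_bot.mpr hI
  let : MulAction G I := MulAction.compHom I (MonoidAlgebra.of (ZMod p) G)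
  have hcard : p ∣ Nat.card I := by
    rw [Module.natCard_eq_pow_finrank (K := ZMod p), Nat.card_zmod]
    exact dvd_pow_self p Module.finrank_pos.ne'
  have hzero : (0 : I) ∈ MulAction.fixedPoints G I := fun g ↦ smul_zero (of (ZMod p) G g)
  obtain ⟨b, hb, hb0⟩ := hG.exists_fixed_point_of_prime_dvd_card_of_fixed_point I hcard hzero
  have hb_eq :
      (b : MonoidAlgebra (ZMod p) G) = (b : MonoidAlgebra (ZMod p) G).coeff 1 • sumTG p G :=
    eq_coeff_one_smul_sumTG fun g ↦ congr_arg Subtype.val (hb g)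
  have hc : (b : MonoidAlgebra (ZMod p) G).coeff 1 ≠ 0 := fun hc ↦
    hb0 (Subtype.ext (by rw [hb_eq, hc, zero_smul, Submodule.coe_zero]))
  rw [← inv_smul_smul₀ hc (sumTG p G), ← hb_eq]
  exact I.smul_of_tower_mem _ b.2

theorem sumTG_smul_eq_zero_of_smul_eq_zero (hG : IsPGroup p G) {N : Type*} [AddCommGroup N]
    [Module (MonoidAlgebra (ZMod p) G) N] {α : MonoidAlgebra (ZMod p) G} {n : N}
    (hα : α ≠ 0) (hαn : α • n = 0) : sumTG p G • n = 0 := by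
  obtain ⟨β, hβ⟩ := Submodule.mem_span_singleton.mp
    (sumTG_mem_of_ne_bot hG (Submodule.span_singleton_eq_bot.not.mpr hα))
  rw [← hβ, smul_eq_mul, mul_smul, hαn, smul_zero]

end

section

variable (p : ℕ) (G : Type) [Group G] [Fintype G] (ι N : Type*) [AddCommGroup N] [Module (ZMod p) N]

noncomputable def sumTGMultiples : (ι → ZMod p) →ₗ[ZMod p] (ι → MonoidAlgebra (ZMod p) G) × N :=
  LinearMap.inl (ZMod p) _ N ∘ₗ (LinearMap.toSpanSingleton (ZMod p) _ (sumTG p G)).compLeft ι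

variable {p G ι N}

theorem sumTGMultiples_injective [Fact p.Prime] : Function.Injective (sumTGMultiples p G ι N) :=
  LinearMap.inl_injective.comp (smul_left_injective (ZMod p) sumTG_ne_zero).comp_left

theorem range_sumTG_smul [Module (MonoidAlgebra (ZMod p) G) N] (hN : ∀ n : N, sumTG p G • n = 0) :
    Set.range (fun m : (ι → MonoidAlgebra (ZMod p) G) × N ↦ sumTG p G • m) =
      Set.range (sumTGMultiples p G ι N) := by
  ext x
  constructor
  · rintro ⟨⟨f, n⟩, rfl⟩
    exact ⟨fun i ↦ ∑ g, (f i).coeff g, Prod.ext (funext fun i ↦ (sumTG_mul (f i)).symm) (hN n).symm⟩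
  · rintro ⟨c, rfl⟩
    refine ⟨(fun i ↦ single 1 (c i), 0), Prod.ext (funext fun i ↦ ?_) (smul_zero _)⟩
    change sumTG p G * single 1 (c i) = c i • sumTG p G
    simp [sumTG_mul]

end

theorem TG_image_finrank_general
    (p : ℕ) [Fact p.Prime] (G : Type) [Group G] [Fintype G] (hG : IsPGroup p G)
    (lam : ℕ) (N : Type) [AddCommGroup N]
    [Module (MonoidAlgebra (ZMod p) G) N]
    [Module (ZMod p) N]
    (hN : ∀ n : N, ∃ α : MonoidAlgebra (ZMod p) G, α ≠ 0 ∧ α • n = 0) :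
    Module.finrank (ZMod p)
      (Submodule.span (ZMod p)
        (Set.range fun m : (Fin lam → MonoidAlgebra (ZMod p) G) × N =>
          sumTG p G • m)) = lam := by
  have hT : ∀ n : N, sumTG p G • n = 0 := fun n ↦
    let ⟨_, hα, hαn⟩ := hN n
    sumTG_smul_eq_zero_of_smul_eq_zero hG hα hαn
  rw [range_sumTG_smul hT, ← LinearMap.coe_range, Submodule.span_eq,
    LinearMap.finrank_range_of_inj sumTGMultiples_injective, Module.finrank_fin_fun]

/-- for a finite `p`-group `G` and a finitely generated module
`M = F_p[G]^λ ⊕ N` with `N` torsion, the image `T_G · M` is an `F_p`-vector space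
of dimension `λ`. -/
theorem TG_image_finrank
    (p : ℕ) [Fact p.Prime] (G : Type) [Group G] [Fintype G] (hG : IsPGroup p G)
    (lam : ℕ) (N : Type) [AddCommGroup N]
    [Module (MonoidAlgebra (ZMod p) G) N]
    [Module (ZMod p) N] [IsScalarTower (ZMod p) (MonoidAlgebra (ZMod p) G) N]
    [Module.Finite (MonoidAlgebra (ZMod p) G) N]
    (hN : ∀ n : N, ∃ α : MonoidAlgebra (ZMod p) G, α ≠ 0 ∧ α • n = 0) :
    Module.finrank (ZMod p)
      (Submodule.span (ZMod p)
        (Set.range fun m : (Fin lam → MonoidAlgebra (ZMod p) G) × N =>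
          sumTG p G • m)) = lam :=
  TG_image_finrank_general p G hG lam N hN
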